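/- Exponential decay of word probabilities and their ε-derivatives (Appendix D): fix ε ∈ (0,1/2) and let ρ = max{ (1−ε)π_00+επ_01, (1−ε)π_10+επ_11, επ_00+(1−ε)π_01, επ_10+(1−ε)π_11 }; then 0 < ρ < 1 and, for every binary sequence (z_i)_{i≥1}: (i) a_n + b_n ≤ ρ^n for all n ≥ 1; (ii) there exist a constant C > 0 and ρ_1 with ρ < ρ_1 < 1 (independent of the sequence (z_i)) such that |d a_n/dε| + |d b_n/dε| ≤ C·ρ_1^n for all n ≥ 1. -/

import Mathlib

/-- The pair `(a_k(ε), b_k(ε))` driven by the binary sequence `z`: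
`a_0 = π_10/(π_01+π_10)`, `b_0 = π_01/(π_01+π_10)`,
`a_k = p_E(z_k)(π_00 a_{k−1} + π_10 b_{k−1})`,
`b_k = p_E(1−z_k)(π_01 a_{k−1} + π_11 b_{k−1})`, where `p_E(0) = 1−ε`, `p_E(1) = ε`. -/
noncomputable def abIter (π00 π01 π10 π11 : ℝ) (z : ℕ → Bool) : ℕ → ℝ → ℝ × ℝ
  | 0 => fun _ => (π10 / (π01 + π10), π01 / (π01 + π10))
  | k + 1 => fun ε =>
      ((if z (k + 1) then ε else 1 - ε) *
          (π00 * (abIter π00 π01 π10 π11 z k ε).1 + π10 * (abIter π00 π01 π10 π11 z k ε).2),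
       (if z (k + 1) then 1 - ε else ε) *
          (π01 * (abIter π00 π01 π10 π11 z k ε).1 + π11 * (abIter π00 π01 π10 π11 z k ε).2))

/-!
The sum `a_{k+1} + b_{k+1}` is `w₀ a_k + w₁ b_k`, where `w₀, w₁` are entries of the noisy
transition matrix, hence at most `ρ`; so `a_n + b_n ≤ ρ^n`. Differentiating the recursion, the
derivative of the factor `p_E(z_{k+1})` is `±1`, and since the rows of `Π` sum to `1` this gives
`d_{k+1} ≤ (a_k + b_k) + ρ d_k ≤ ρ^k + ρ d_k` for `d_k = |a_k'| + |b_k'|`. For any `ρ < ρ₁` this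
recursion yields `d_n ≤ ρ₁^n / (ρ₁ - ρ)`, because `ρ₁^k + ρ ρ₁^k / (ρ₁ - ρ) = ρ₁^(k+1) / (ρ₁ - ρ)`.
-/

theorem le_inv_sub_mul_pow_of_le_pow_add_mul {d : ℕ → ℝ} {ρ ρ₁ : ℝ} (hρ : 0 ≤ ρ)
    (hρρ₁ : ρ < ρ₁) (h0 : d 0 ≤ 0) (hstep : ∀ k, d (k + 1) ≤ ρ ^ k + ρ * d k) (n : ℕ) :
    d n ≤ (ρ₁ - ρ)⁻¹ * ρ₁ ^ n := by
  have hgap : 0 < ρ₁ - ρ := sub_pos.2 hρρ₁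
  induction n with
  | zero => simpa using h0.trans (inv_pos.2 hgap).le
  | succ k ih =>
    calc d (k + 1) ≤ ρ ^ k + ρ * d k := hstep k
      _ ≤ ρ₁ ^ k + ρ * ((ρ₁ - ρ)⁻¹ * ρ₁ ^ k) := by gcongr
      _ = (ρ₁ - ρ)⁻¹ * ρ₁ ^ (k + 1) := by
        field_simp
        ring

def noiseProb (ε : ℝ) (b : Bool) : ℝ := if b then ε else 1 - ε

/-- `noisyWeight π_i0 π_i1 ε z` is the `i`-th row sum of `Π · diag (p_E(z), p_E(1-z))`; for
`z = 0, 1` and `i = 0, 1` these are the four numbers whose maximum is `ρ`. -/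
def noisyWeight (π₀ π₁ ε : ℝ) (b : Bool) : ℝ := noiseProb ε b * π₀ + noiseProb ε (!b) * π₁

def noisyRate (π00 π01 π10 π11 ε : ℝ) : ℝ :=
  max (max ((1 - ε) * π00 + ε * π01) ((1 - ε) * π10 + ε * π11))
    (max (ε * π00 + (1 - ε) * π01) (ε * π10 + (1 - ε) * π11))

section NoisyRate

variable {π00 π01 π10 π11 ε : ℝ}

theorem noiseProb_nonneg (hε0 : 0 ≤ ε) (hε1 : ε ≤ 1) (b : Bool) : 0 ≤ noiseProb ε b := by
  cases b <;> simp only [noiseProb, Bool.false_eq_true, if_true, if_false] <;> linarith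

theorem hasDerivAt_noiseProb (b : Bool) (ε : ℝ) :
    HasDerivAt (fun t => noiseProb t b) (if b then 1 else -1) ε := by
  cases b
  · simpa [noiseProb] using (hasDerivAt_id ε).const_sub 1
  · simpa [noiseProb] using hasDerivAt_id' ε

theorem differentiable_noiseProb (b : Bool) : Differentiable ℝ (fun t => noiseProb t b) :=
  fun ε => (hasDerivAt_noiseProb b ε).differentiableAt

theorem noisyWeight_left_le_noisyRate (π00 π01 π10 π11 ε : ℝ) (b : Bool) :
    noisyWeight π00 π01 ε b ≤ noisyRate π00 π01 π10 π11 ε := by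
  cases b
  · exact (le_max_left _ _).trans (le_max_left _ _)
  · exact (le_max_left _ _).trans (le_max_right _ _)

theorem noisyWeight_right_le_noisyRate (π00 π01 π10 π11 ε : ℝ) (b : Bool) :
    noisyWeight π10 π11 ε b ≤ noisyRate π00 π01 π10 π11 ε := by
  cases b
  · exact (le_max_right _ _).trans (le_max_left _ _)
  · exact (le_max_right _ _).trans (le_max_right _ _)

theorem sub_mul_add_mul_pos {x y : ℝ} (hx : 0 < x) (hy : 0 < y) (hε0 : 0 ≤ ε) (hε1 : ε ≤ 1) :
    0 < (1 - ε) * x + ε * y := by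
  rcases le_total x y with hxy | hxy <;> nlinarith

theorem noisyRate_pos (h00 : 0 < π00) (h01 : 0 < π01) (hε0 : 0 ≤ ε) (hε1 : ε ≤ 1) :
    0 < noisyRate π00 π01 π10 π11 ε :=
  (sub_mul_add_mul_pos h00 h01 hε0 hε1).trans_le ((le_max_left _ _).trans (le_max_left _ _))

/-- Each of the four entries is `1` minus another one of the same form, which is positive. -/
theorem noisyRate_lt_one (h00 : 0 < π00) (h01 : 0 < π01) (h10 : 0 < π10) (h11 : 0 < π11)
    (hrow0 : π00 + π01 = 1) (hrow1 : π10 + π11 = 1) (hε0 : 0 ≤ ε) (hε1 : ε ≤ 1) :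
    noisyRate π00 π01 π10 π11 ε < 1 := by
  have := sub_mul_add_mul_pos h00 h01 hε0 hε1
  have := sub_mul_add_mul_pos h01 h00 hε0 hε1
  have := sub_mul_add_mul_pos h10 h11 hε0 hε1
  have := sub_mul_add_mul_pos h11 h10 hε0 hε1
  refine max_lt (max_lt ?_ ?_) (max_lt ?_ ?_) <;> linarith

end NoisyRate

section WordProbabilities

variable {π00 π01 π10 π11 ε ρ : ℝ}

theorem abIter_succ (z : ℕ → Bool) (k : ℕ) (ε : ℝ) :
    abIter π00 π01 π10 π11 z (k + 1) ε =
      (noiseProb ε (z (k + 1)) * (π00 * (abIter π00 π01 π10 π11 z k ε).1 +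
          π10 * (abIter π00 π01 π10 π11 z k ε).2),
        noiseProb ε (!z (k + 1)) * (π01 * (abIter π00 π01 π10 π11 z k ε).1 +
          π11 * (abIter π00 π01 π10 π11 z k ε).2)) := by
  simp only [abIter, noiseProb]
  cases z (k + 1) <;> simp

theorem abIter_succ_fst_add_snd (z : ℕ → Bool) (k : ℕ) :
    (abIter π00 π01 π10 π11 z (k + 1) ε).1 + (abIter π00 π01 π10 π11 z (k + 1) ε).2 =
      noisyWeight π00 π01 ε (z (k + 1)) * (abIter π00 π01 π10 π11 z k ε).1 +
        noisyWeight π10 π11 ε (z (k + 1)) * (abIter π00 π01 π10 π11 z k ε).2 := by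
  rw [abIter_succ]
  simp only [noisyWeight]
  ring

theorem abIter_nonneg (h00 : 0 ≤ π00) (h01 : 0 ≤ π01) (h10 : 0 ≤ π10) (h11 : 0 ≤ π11)
    (hε0 : 0 ≤ ε) (hε1 : ε ≤ 1) (z : ℕ → Bool) (n : ℕ) :
    0 ≤ (abIter π00 π01 π10 π11 z n ε).1 ∧ 0 ≤ (abIter π00 π01 π10 π11 z n ε).2 := by
  induction n with
  | zero => exact ⟨by simp only [abIter]; positivity, by simp only [abIter]; positivity⟩
  | succ k ih =>
    obtain ⟨ha, hb⟩ := ih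
    have hp := noiseProb_nonneg hε0 hε1
    rw [abIter_succ]
    exact ⟨by have := hp (z (k + 1)); positivity, by have := hp (!z (k + 1)); positivity⟩

theorem abIter_fst_add_snd_le_pow (h00 : 0 ≤ π00) (h01 : 0 ≤ π01) (h10 : 0 ≤ π10)
    (h11 : 0 ≤ π11) (hε0 : 0 ≤ ε) (hε1 : ε ≤ 1) (hρ : 0 ≤ ρ)
    (hw0 : ∀ b, noisyWeight π00 π01 ε b ≤ ρ) (hw1 : ∀ b, noisyWeight π10 π11 ε b ≤ ρ)
    (z : ℕ → Bool) (n : ℕ) :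
    (abIter π00 π01 π10 π11 z n ε).1 + (abIter π00 π01 π10 π11 z n ε).2 ≤ ρ ^ n := by
  induction n with
  | zero =>
    simp only [abIter, pow_zero, ← add_div, add_comm π10]
    exact div_self_le_one _
  | succ k ih =>
    obtain ⟨ha, hb⟩ := abIter_nonneg h00 h01 h10 h11 hε0 hε1 z k
    rw [abIter_succ_fst_add_snd, pow_succ']
    calc _ ≤ ρ * (abIter π00 π01 π10 π11 z k ε).1 + ρ * (abIter π00 π01 π10 π11 z k ε).2 := by
          gcongr
          exacts [hw0 _, hw1 _]
      _ ≤ ρ * ρ ^ k := by rw [← mul_add]; gcongr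

theorem differentiable_abIter (z : ℕ → Bool) (n : ℕ) :
    Differentiable ℝ (abIter π00 π01 π10 π11 z n) := by
  induction n with
  | zero => exact differentiable_const _
  | succ k ih =>
    rw [funext (abIter_succ z k)]
    have := differentiable_noiseProb (z (k + 1))
    have := differentiable_noiseProb (!z (k + 1))
    fun_prop

theorem abs_deriv_noiseProb_mul_le {f g : ℝ → ℝ} {p q : ℝ} (hf : DifferentiableAt ℝ f ε)
    (hg : DifferentiableAt ℝ g ε) (hp : 0 ≤ p) (hq : 0 ≤ q) (hfg : 0 ≤ p * f ε + q * g ε)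
    (hε0 : 0 ≤ ε) (hε1 : ε ≤ 1) (b : Bool) :
    |deriv (fun t => noiseProb t b * (p * f t + q * g t)) ε| ≤
      (p * f ε + q * g ε) + noiseProb ε b * (p * |deriv f ε| + q * |deriv g ε|) := by
  have hN := noiseProb_nonneg hε0 hε1 b
  have hsign : |(if b then 1 else -1 : ℝ)| = 1 := by cases b <;> simp
  have hderiv : HasDerivAt (fun t => noiseProb t b * (p * f t + q * g t))
      ((if b then 1 else -1) * (p * f ε + q * g ε) +
        noiseProb ε b * (p * deriv f ε + q * deriv g ε)) ε :=
    (hasDerivAt_noiseProb b ε).mul ((hf.hasDerivAt.const_mul p).add (hg.hasDerivAt.const_mul q))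
  rw [hderiv.deriv]
  calc _ ≤ |(if b then 1 else -1 : ℝ) * (p * f ε + q * g ε)| +
        |noiseProb ε b * (p * deriv f ε + q * deriv g ε)| := abs_add_le _ _
    _ ≤ (p * f ε + q * g ε) + noiseProb ε b * (|p * deriv f ε| + |q * deriv g ε|) := by
        rw [abs_mul, abs_mul, hsign, one_mul, abs_of_nonneg hfg, abs_of_nonneg hN]
        gcongr
        exact abs_add_le _ _
    _ = _ := by rw [abs_mul, abs_mul, abs_of_nonneg hp, abs_of_nonneg hq]

theorem abs_deriv_abIter_succ_le (h00 : 0 ≤ π00) (h01 : 0 ≤ π01) (h10 : 0 ≤ π10)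
    (h11 : 0 ≤ π11) (hrow0 : π00 + π01 = 1) (hrow1 : π10 + π11 = 1) (hε0 : 0 ≤ ε)
    (hε1 : ε ≤ 1) (hw0 : ∀ b, noisyWeight π00 π01 ε b ≤ ρ)
    (hw1 : ∀ b, noisyWeight π10 π11 ε b ≤ ρ) (z : ℕ → Bool) (k : ℕ) :
    |deriv (fun t => (abIter π00 π01 π10 π11 z (k + 1) t).1) ε| +
        |deriv (fun t => (abIter π00 π01 π10 π11 z (k + 1) t).2) ε| ≤
      ((abIter π00 π01 π10 π11 z k ε).1 + (abIter π00 π01 π10 π11 z k ε).2) +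
        ρ * (|deriv (fun t => (abIter π00 π01 π10 π11 z k t).1) ε| +
          |deriv (fun t => (abIter π00 π01 π10 π11 z k t).2) ε|) := by
  set a := (abIter π00 π01 π10 π11 z k ε).1
  set b := (abIter π00 π01 π10 π11 z k ε).2
  set a' := deriv (fun t => (abIter π00 π01 π10 π11 z k t).1) ε
  set b' := deriv (fun t => (abIter π00 π01 π10 π11 z k t).2) ε
  obtain ⟨ha, hb⟩ := abIter_nonneg h00 h01 h10 h11 hε0 hε1 z k
  have hA : DifferentiableAt ℝ (fun t => (abIter π00 π01 π10 π11 z k t).1) ε :=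
    (differentiable_abIter z k).fst ε
  have hB : DifferentiableAt ℝ (fun t => (abIter π00 π01 π10 π11 z k t).2) ε :=
    (differentiable_abIter z k).snd ε
  simp only [abIter_succ]
  calc _ ≤ (π00 * a + π10 * b + noiseProb ε (z (k + 1)) * (π00 * |a'| + π10 * |b'|)) +
        (π01 * a + π11 * b + noiseProb ε (!z (k + 1)) * (π01 * |a'| + π11 * |b'|)) :=
        add_le_add (abs_deriv_noiseProb_mul_le hA hB h00 h10 (by positivity) hε0 hε1 _)
          (abs_deriv_noiseProb_mul_le hA hB h01 h11 (by positivity) hε0 hε1 _)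
    _ = (a + b) + (noisyWeight π00 π01 ε (z (k + 1)) * |a'| +
          noisyWeight π10 π11 ε (z (k + 1)) * |b'|) := by
        simp only [noisyWeight]
        linear_combination a * hrow0 + b * hrow1
    _ ≤ (a + b) + ρ * (|a'| + |b'|) := by
        rw [mul_add]
        gcongr
        exacts [hw0 _, hw1 _]

end WordProbabilities

/-- Appendix D: exponential decay of word probabilities and of their `ε`-derivatives.
With `ρ` the maximum of the four entries of the noisy transition matrix, `0 < ρ < 1`,
`a_n + b_n ≤ ρ^n`, and there are `C > 0` and `ρ < ρ₁ < 1` (independent of the symbol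
sequence) with `|a_n′| + |b_n′| ≤ C ρ₁^n`. -/
theorem word_probability_decay (π00 π01 π10 π11 ε : ℝ)
    (h00 : 0 < π00) (h01 : 0 < π01) (h10 : 0 < π10) (h11 : 0 < π11)
    (hrow0 : π00 + π01 = 1) (hrow1 : π10 + π11 = 1)
    (hε0 : 0 < ε) (hε : ε < 1 / 2) :
    0 < max (max ((1 - ε) * π00 + ε * π01) ((1 - ε) * π10 + ε * π11))
          (max (ε * π00 + (1 - ε) * π01) (ε * π10 + (1 - ε) * π11)) ∧
    max (max ((1 - ε) * π00 + ε * π01) ((1 - ε) * π10 + ε * π11))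
          (max (ε * π00 + (1 - ε) * π01) (ε * π10 + (1 - ε) * π11)) < 1 ∧
    (∀ z : ℕ → Bool, ∀ n : ℕ, 1 ≤ n →
      (abIter π00 π01 π10 π11 z n ε).1 + (abIter π00 π01 π10 π11 z n ε).2 ≤
        (max (max ((1 - ε) * π00 + ε * π01) ((1 - ε) * π10 + ε * π11))
          (max (ε * π00 + (1 - ε) * π01) (ε * π10 + (1 - ε) * π11))) ^ n) ∧
    ∃ C : ℝ, 0 < C ∧ ∃ ρ₁ : ℝ,
      max (max ((1 - ε) * π00 + ε * π01) ((1 - ε) * π10 + ε * π11))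
          (max (ε * π00 + (1 - ε) * π01) (ε * π10 + (1 - ε) * π11)) < ρ₁ ∧ ρ₁ < 1 ∧
      ∀ z : ℕ → Bool, ∀ n : ℕ, 1 ≤ n →
        |deriv (fun t => (abIter π00 π01 π10 π11 z n t).1) ε| +
          |deriv (fun t => (abIter π00 π01 π10 π11 z n t).2) ε| ≤ C * ρ₁ ^ n := by
  have hε1 : ε ≤ 1 := by linarith
  have hρ0 : 0 < noisyRate π00 π01 π10 π11 ε := noisyRate_pos h00 h01 hε0.le hε1
  have hρ1 := noisyRate_lt_one h00 h01 h10 h11 hrow0 hrow1 hε0.le hε1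
  have hw0 := noisyWeight_left_le_noisyRate π00 π01 π10 π11 ε
  have hw1 := noisyWeight_right_le_noisyRate π00 π01 π10 π11 ε
  have hsum := abIter_fst_add_snd_le_pow h00.le h01.le h10.le h11.le hε0.le hε1 hρ0.le hw0 hw1
  obtain ⟨ρ₁, hρρ₁, hρ₁⟩ := exists_between hρ1
  refine ⟨hρ0, hρ1, fun z n _ => hsum z n, _, inv_pos.2 (sub_pos.2 hρρ₁), ρ₁, hρρ₁, hρ₁,
    fun z n _ => le_inv_sub_mul_pow_of_le_pow_add_mul
      (d := fun n => |deriv (fun t => (abIter π00 π01 π10 π11 z n t).1) ε| +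
        |deriv (fun t => (abIter π00 π01 π10 π11 z n t).2) ε|) hρ0.le hρρ₁ ?_ ?_ n⟩
  · simp [abIter]
  · intro k
    have := abs_deriv_abIter_succ_le h00.le h01.le h10.le h11.le hrow0 hrow1 hε0.le hε1 hw0 hw1 z k
    linarith [hsum z k]
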